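/- Let Σ₀ be a d×d real symmetric positive definite matrix, let Σ₁, …, Σ_N be d×d real symmetric positive definite matrices, and let w₁, …, w_N be nonnegative reals with ∑_{i=1}^N wᵢ = 1. Set T̄ := ∑_{i=1}^N wᵢ T_{Σ₀→Σᵢ}. Then (λ_max(T̄ Σ₀ T̄))^{1/2} ≤ ∑_{i=1}^N wᵢ (λ_max(Σᵢ))^{1/2}, where λ_max denotes the largest eigenvalue. (This expresses that √λ_max is convex along generalized geodesics of the Bures–Wasserstein geometry.) -/

import Mathlib

open Matrix
open scoped Classical

/-- Symmetric PSD square root of a positive semidefinite matrix (junk value `0` otherwise). -/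
noncomputable def msqrt {d : ℕ} (M : Matrix (Fin d) (Fin d) ℝ) : Matrix (Fin d) (Fin d) ℝ :=
  if h : M.PosSemidef then
    h.1.eigenvectorUnitary.1 * diagonal ((↑) ∘ (√·) ∘ h.1.eigenvalues) *
      (star h.1.eigenvectorUnitary : Matrix (Fin d) (Fin d) ℝ)
  else 0

/-- Optimal transport map `T_{A→B} = A^{-1/2} (A^{1/2} B A^{1/2})^{1/2} A^{-1/2}`. -/
noncomputable def Tmap {d : ℕ} (A B : Matrix (Fin d) (Fin d) ℝ) : Matrix (Fin d) (Fin d) ℝ :=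
  (msqrt A)⁻¹ * msqrt (msqrt A * B * msqrt A) * (msqrt A)⁻¹

/-- Squared Bures–Wasserstein distance `tr(A + B - 2 (A^{1/2} B A^{1/2})^{1/2})`. -/
noncomputable def W2sq {d : ℕ} (A B : Matrix (Fin d) (Fin d) ℝ) : ℝ :=
  (A + B - (2 : ℝ) • msqrt (msqrt A * B * msqrt A)).trace

/-- Bures–Wasserstein distance. -/
noncomputable def W2 {d : ℕ} (A B : Matrix (Fin d) (Fin d) ℝ) : ℝ :=
  Real.sqrt (W2sq A B)

/-- Smallest eigenvalue of a (hermitian) matrix. -/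
noncomputable def lamMin {d : ℕ} (M : Matrix (Fin d) (Fin d) ℝ) : ℝ :=
  if h : M.IsHermitian then ⨅ i, h.eigenvalues i else 0

/-- Largest eigenvalue of a (hermitian) matrix. -/
noncomputable def lamMax {d : ℕ} (M : Matrix (Fin d) (Fin d) ℝ) : ℝ :=
  if h : M.IsHermitian then ⨆ i, h.eigenvalues i else 0

/-- `Kset a b` : symmetric positive definite matrices with all eigenvalues in `[a, b]`,
expressed via the Loewner order `a • I ⪯ S ⪯ b • I`. -/
def Kset {d : ℕ} (a b : ℝ) : Set (Matrix (Fin d) (Fin d) ℝ) :=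
  {S | S.PosDef ∧ (S - a • (1 : Matrix (Fin d) (Fin d) ℝ)).PosSemidef ∧
    (b • (1 : Matrix (Fin d) (Fin d) ℝ) - S).PosSemidef}

/-- Barycenter functional `F(S) = (1/(2N)) ∑ᵢ W₂²(S, Σᵢ)`. -/
noncomputable def Fbar {d N : ℕ} (Ss : Fin N → Matrix (Fin d) (Fin d) ℝ)
    (S : Matrix (Fin d) (Fin d) ℝ) : ℝ :=
  (1 / (2 * (N : ℝ))) * ∑ i, W2sq S (Ss i)

/-- Bures–Wasserstein gradient of the barycenter functional: `I - (1/N) ∑ᵢ T_{S→Σᵢ}`. -/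
noncomputable def gradF {d N : ℕ} (Ss : Fin N → Matrix (Fin d) (Fin d) ℝ)
    (S : Matrix (Fin d) (Fin d) ℝ) : Matrix (Fin d) (Fin d) ℝ :=
  1 - (N : ℝ)⁻¹ • ∑ i, Tmap S (Ss i)

/-- `‖A‖_S² = tr(A S A)`. -/
noncomputable def normAtSq {d : ℕ} (A S : Matrix (Fin d) (Fin d) ℝ) : ℝ :=
  (A * S * A).trace

/-! With `R = Σ₀^{1/2}`, every symmetric `A` satisfies `A Σ₀ A = (R A)ᵀ (R A)`, so
`√λ_max (A Σ₀ A)` is the spectral norm `‖R A‖`. Since `T_{Σ₀→Σᵢ} Σ₀ T_{Σ₀→Σᵢ} = Σᵢ`, the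
inequality is the triangle inequality `‖R ∑ᵢ wᵢ Tᵢ‖ ≤ ∑ᵢ wᵢ ‖R Tᵢ‖`. -/

open scoped MatrixOrder Matrix.Norms.L2Operator

section
variable {d : ℕ}

theorem msqrt_eq_sqrt {M : Matrix (Fin d) (Fin d) ℝ} (h : M.PosSemidef) :
    msqrt M = CFC.sqrt M := by
  rw [msqrt, dif_pos h, CFC.sqrt_eq_real_sqrt M h.nonneg, cfcₙ_eq_cfc, h.1.cfc_eq]
  rfl

theorem msqrt_isHermitian (M : Matrix (Fin d) (Fin d) ℝ) : (msqrt M).IsHermitian := by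
  by_cases h : M.PosSemidef
  · rw [msqrt_eq_sqrt h]
    exact (CFC.sqrt_nonneg M).posSemidef.1
  · rw [msqrt, dif_neg h]
    exact isHermitian_zero

theorem msqrt_mul_self {M : Matrix (Fin d) (Fin d) ℝ} (h : M.PosSemidef) :
    msqrt M * msqrt M = M := by
  rw [msqrt_eq_sqrt h]
  exact CFC.sqrt_mul_sqrt_self M h.nonneg

theorem Tmap_isHermitian (A B : Matrix (Fin d) (Fin d) ℝ) : (Tmap A B).IsHermitian := by
  have h := isHermitian_conjTranspose_mul_mul (msqrt A)⁻¹
    (msqrt_isHermitian (msqrt A * B * msqrt A))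
  rwa [(msqrt_isHermitian A).inv.eq] at h

theorem Tmap_mul_mul_self {A B : Matrix (Fin d) (Fin d) ℝ} (hA : A.PosDef) (hB : B.PosSemidef) :
    Tmap A B * A * Tmap A B = B := by
  set R := msqrt A
  have hRR : R * R = A := msqrt_mul_self hA.posSemidef
  have hRh : Rᴴ = R := msqrt_isHermitian A
  have hR : IsUnit R.det :=
    isUnit_of_mul_isUnit_left (by rw [← det_mul, hRR]; exact hA.det_pos.ne'.isUnit)
  have inv_mul_cancel (X : Matrix (Fin d) (Fin d) ℝ) : R⁻¹ * (R * X) = X :=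
    nonsing_inv_mul_cancel_left R X hR
  have mul_inv_cancel (X : Matrix (Fin d) (Fin d) ℝ) : R * (R⁻¹ * X) = X :=
    mul_nonsing_inv_cancel_left R X hR
  have hK : (R * B * R).PosSemidef := by
    simpa only [hRh] using hB.mul_mul_conjTranspose_same R
  have hSS := msqrt_mul_self hK
  set S := msqrt (R * B * R)
  calc Tmap A B * A * Tmap A B = R⁻¹ * S * R⁻¹ * (R * R) * (R⁻¹ * S * R⁻¹) := by rw [hRR]; rfl
    _ = R⁻¹ * (S * S) * R⁻¹ := by simp only [Matrix.mul_assoc, inv_mul_cancel, mul_inv_cancel]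
    _ = B := by
      rw [hSS]
      simp only [Matrix.mul_assoc, inv_mul_cancel, mul_nonsing_inv R hR, Matrix.mul_one]

theorem pi_norm_eq_iSup_of_nonneg {ι : Type*} [Fintype ι] {f : ι → ℝ} (hf : 0 ≤ f) :
    ‖f‖ = ⨆ i, f i := by
  have hsup : 0 ≤ ⨆ i, f i := Real.iSup_nonneg hf
  refine le_antisymm ((pi_norm_le_iff_of_nonneg hsup).2 fun i => ?_)
    (Real.iSup_le (fun i => (le_abs_self _).trans (norm_le_pi_norm f i)) (norm_nonneg _))
  rw [Real.norm_of_nonneg (hf i)]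
  exact le_ciSup (Set.finite_range f).bddAbove i

theorem lamMax_eq_l2_opNorm {M : Matrix (Fin d) (Fin d) ℝ} (hM : M.PosSemidef) :
    lamMax M = ‖M‖ := by
  have hnorm : ‖M‖ = ‖hM.1.eigenvalues‖ := by
    conv_lhs => rw [hM.1.spectral_theorem, Unitary.conjStarAlgAut_apply]
    rw [← Unitary.coe_star, CStarRing.norm_mul_coe_unitary, CStarRing.norm_coe_unitary_mul,
      l2_opNorm_diagonal]
    rfl
  rw [hnorm, pi_norm_eq_iSup_of_nonneg hM.eigenvalues_nonneg, lamMax, dif_pos hM.1]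

theorem lamMax_conjTranspose_mul_self (A : Matrix (Fin d) (Fin d) ℝ) :
    lamMax (Aᴴ * A) = ‖A‖ ^ 2 := by
  rw [lamMax_eq_l2_opNorm (posSemidef_conjTranspose_mul_self A),
    l2_opNorm_conjTranspose_mul_self, sq]

theorem sqrt_lamMax_mul_mul_eq_l2_opNorm {A S : Matrix (Fin d) (Fin d) ℝ} (hA : A.IsHermitian)
    (hS : S.PosSemidef) : √(lamMax (A * S * A)) = ‖msqrt S * A‖ := by
  have hgram : A * S * A = (msqrt S * A)ᴴ * (msqrt S * A) := by
    conv_lhs => rw [← msqrt_mul_self hS]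
    rw [conjTranspose_mul, hA.eq, (msqrt_isHermitian S).eq]
    simp only [Matrix.mul_assoc]
  rw [hgram, lamMax_conjTranspose_mul_self, Real.sqrt_sq (norm_nonneg _)]

end

theorem sqrt_lamMax_generalized_barycenter_general {d N : ℕ}
    (S0 : Matrix (Fin d) (Fin d) ℝ) (hS0 : S0.PosDef)
    (Ss : Fin N → Matrix (Fin d) (Fin d) ℝ) (hSs : ∀ i, (Ss i).PosDef)
    (w : Fin N → ℝ) (hw : ∀ i, 0 ≤ w i) :
    Real.sqrt (lamMax
        ((∑ i, w i • Tmap S0 (Ss i)) * S0 * (∑ i, w i • Tmap S0 (Ss i)))) ≤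
      ∑ i, w i * Real.sqrt (lamMax (Ss i)) := by
  have hbar : (∑ i, w i • Tmap S0 (Ss i)).IsHermitian :=
    isSelfAdjoint_sum _ fun i _ => (Tmap_isHermitian S0 (Ss i)).smul (IsSelfAdjoint.all (w i))
  have hSs_eq i : √(lamMax (Ss i)) = ‖msqrt S0 * Tmap S0 (Ss i)‖ := by
    rw [← sqrt_lamMax_mul_mul_eq_l2_opNorm (Tmap_isHermitian S0 (Ss i)) hS0.posSemidef,
      Tmap_mul_mul_self hS0 (hSs i).posSemidef]
  rw [sqrt_lamMax_mul_mul_eq_l2_opNorm hbar hS0.posSemidef, Matrix.mul_sum]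
  calc ‖∑ i, msqrt S0 * w i • Tmap S0 (Ss i)‖ ≤ ∑ i, ‖msqrt S0 * w i • Tmap S0 (Ss i)‖ :=
        norm_sum_le _ _
    _ = ∑ i, w i * √(lamMax (Ss i)) := by
        simp only [Matrix.mul_smul, norm_smul, Real.norm_of_nonneg (hw _), hSs_eq]

/-- `√λ_max` is convex along generalized geodesics of the Bures–Wasserstein geometry. -/
theorem sqrt_lamMax_generalized_barycenter {d N : ℕ}
    (S0 : Matrix (Fin d) (Fin d) ℝ) (hS0 : S0.PosDef)
    (Ss : Fin N → Matrix (Fin d) (Fin d) ℝ) (hSs : ∀ i, (Ss i).PosDef)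
    (w : Fin N → ℝ) (hw : ∀ i, 0 ≤ w i) (hw1 : ∑ i, w i = 1) :
    Real.sqrt (lamMax
        ((∑ i, w i • Tmap S0 (Ss i)) * S0 * (∑ i, w i • Tmap S0 (Ss i)))) ≤
      ∑ i, w i * Real.sqrt (lamMax (Ss i)) :=
  sqrt_lamMax_generalized_barycenter_general S0 hS0 Ss hSs w hw
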